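/- arXiv:1307.7085 — 2 statements merged into one kernel-verified Lean document; each statement's English description precedes it below -/
import Mathlib

section
/- For all z ∈ ℂ and all q > 1, one has e_{q²}(|z|)² ≤ e_q(|(1+q)z|). -/
open scoped BigOperators
noncomputable section

/-- The q-factorial `[n]_q! = ∏_{l=1}^n (q^l - 1)/(q - 1)`. -/
def qFact (q : ℝ) (n : ℕ) : ℝ := ∏ l ∈ Finset.range n, (q ^ (l + 1) - 1) / (q - 1)

/-- The real q-exponential `e_q(x) = Σ_{n≥0} x^n/[n]_q!`. -/
def qExpR (q x : ℝ) : ℝ := ∑' n : ℕ, x ^ n / qFact q n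

section aux
variable {q : ℝ}

lemma qFact_factor_pos (hq : 1 < q) (l : ℕ) : 0 < (q ^ (l + 1) - 1) / (q - 1) := by
  apply div_pos
  · have : 1 < q ^ (l+1) := one_lt_pow₀ hq (by omega)
    linarith
  · linarith

lemma qFact_pos (hq : 1 < q) (n : ℕ) : 0 < qFact q n :=
  Finset.prod_pos fun l _ => qFact_factor_pos hq l

lemma qFact_succ (q : ℝ) (n : ℕ) :
    qFact q (n+1) = qFact q n * ((q ^ (n + 1) - 1) / (q - 1)) :=
  Finset.prod_range_succ _ n

lemma qFact_zero (q : ℝ) : qFact q 0 = 1 := Finset.prod_range_zero _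

/-- Gaussian binomial as a real number. -/
def gb (q : ℝ) (n k : ℕ) : ℝ := qFact q n / (qFact q k * qFact q (n - k))

lemma gb_pos (hq : 1 < q) (n k : ℕ) : 0 < gb q n k :=
  div_pos (qFact_pos hq n) (mul_pos (qFact_pos hq k) (qFact_pos hq _))

lemma gb_zero (hq : 1 < q) (n : ℕ) : gb q n 0 = 1 := by
  simp [gb, qFact_zero, div_self (qFact_pos hq n).ne']

lemma gb_self (hq : 1 < q) (n : ℕ) : gb q n n = 1 := by
  simp [gb, qFact_zero, div_self (qFact_pos hq n).ne']

lemma gb_symm (n k : ℕ) (h : k ≤ n) : gb q n k = gb q n (n - k) := by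
  have : n - (n - k) = k := by omega
  rw [gb, gb, this, mul_comm]

lemma gb_pascal (hq : 1 < q) (k m : ℕ) :
    gb q (k + m + 2) (k + 1) = q ^ (m + 1) * gb q (k + m + 1) k + gb q (k + m + 1) (k + 1) := by
  have h1 : k + m + 2 - (k + 1) = m + 1 := by omega
  have h2 : k + m + 1 - k = m + 1 := by omega
  have h3 : k + m + 1 - (k + 1) = m := by omega
  rw [gb, gb, gb, h1, h2, h3]
  have e1 : qFact q (k + m + 2) = qFact q (k + m + 1) * ((q ^ (k + m + 2) - 1) / (q - 1)) := by
    have := qFact_succ q (k + m + 1); rwa [show k+m+1+1 = k+m+2 by omega] at this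
  have e2 : qFact q (k + 1) = qFact q k * ((q ^ (k + 1) - 1) / (q - 1)) := qFact_succ q k
  have e3 : qFact q (m + 1) = qFact q m * ((q ^ (m + 1) - 1) / (q - 1)) := qFact_succ q m
  have hk := (qFact_pos hq k).ne'
  have hm := (qFact_pos hq m).ne'
  have hq1 : q - 1 ≠ 0 := by linarith
  have hk1 : q ^ (k + 1) - 1 ≠ 0 := by
    have : 1 < q ^ (k+1) := one_lt_pow₀ hq (by omega); linarith
  have hm1 : q ^ (m + 1) - 1 ≠ 0 := by
    have : 1 < q ^ (m+1) := one_lt_pow₀ hq (by omega); linarith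
  rw [e1, e2, e3]
  have hpow : q ^ (m + 1) * q ^ (k + 1) = q ^ (k + m + 2) := by
    rw [← pow_add]; ring_nf
  field_simp
  ring_nf

/-- Key identity: `Σ_k q^k * gb_{q²}(n,k) = ∏_{l=1}^n (1+q^l)`. -/
lemma key (hq : 1 < q) (n : ℕ) :
    ∑ k ∈ Finset.range (n + 1), q ^ k * gb (q ^ 2) n k
      = ∏ l ∈ Finset.range n, (q ^ (l + 1) + 1) := by
  have hQ : 1 < q ^ 2 := by nlinarith
  induction n with
  | zero => simp [gb_zero hQ]
  | succ n ih =>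
    have hsplit : ∑ k ∈ Finset.range (n + 2), q ^ k * gb (q ^ 2) (n+1) k
        = (∑ k ∈ Finset.range n, q ^ (k+1) * gb (q ^ 2) (n+1) (k+1))
          + q ^ 0 * gb (q ^ 2) (n+1) 0 + q ^ (n+1) * gb (q ^ 2) (n+1) (n+1) := by
      rw [Finset.sum_range_succ, Finset.sum_range_succ']
    have hpascal : ∀ k ∈ Finset.range n,
        q ^ (k+1) * gb (q ^ 2) (n+1) (k+1)
          = q ^ (2*n+1-k) * gb (q ^ 2) n k + q ^ (k+1) * gb (q ^ 2) n (k+1) := by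
      intro k hk
      rw [Finset.mem_range] at hk
      obtain ⟨m, rfl⟩ : ∃ m, n = k + m + 1 := ⟨n - k - 1, by omega⟩
      rw [gb_pascal hQ]
      have h1 : ((q:ℝ) ^ 2) ^ (m+1) = q ^ (2*(m+1)) := by rw [← pow_mul]
      have h2 : (q:ℝ) ^ (k+1) * q ^ (2*(m+1)) = q ^ (2*(k+m+1)+1-k) := by
        rw [← pow_add]; congr 1; omega
      rw [h1, mul_add, ← mul_assoc, h2]
    rw [hsplit, Finset.sum_congr rfl hpascal, Finset.sum_add_distrib]
    have hB : ∑ k ∈ Finset.range n, q ^ (k+1) * gb (q ^ 2) n (k+1)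
        = (∑ k ∈ Finset.range (n+1), q ^ k * gb (q ^ 2) n k) - q ^ 0 * gb (q ^ 2) n 0 := by
      rw [Finset.sum_range_succ']; ring
    have hA : ∑ k ∈ Finset.range n, q ^ (2*n+1-k) * gb (q ^ 2) n k
        = (∑ k ∈ Finset.range (n+1), q ^ (2*n+1-k) * gb (q ^ 2) n k)
          - q ^ (2*n+1-n) * gb (q ^ 2) n n := by
      rw [Finset.sum_range_succ]; ring
    have hrefl : ∑ k ∈ Finset.range (n+1), q ^ (2*n+1-k) * gb (q ^ 2) n k
        = q ^ (n+1) * ∑ k ∈ Finset.range (n+1), q ^ k * gb (q ^ 2) n k := by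
      rw [← Finset.sum_range_reflect, Finset.mul_sum]
      apply Finset.sum_congr rfl
      intro k hk
      rw [Finset.mem_range] at hk
      have h1 : n + 1 - 1 - k = n - k := by omega
      have h2 : 2*n+1 - (n - k) = (n+1) + k := by omega
      rw [h1, h2, ← gb_symm n k (by omega), pow_add, mul_assoc]
    rw [hA, hrefl, hB, ih, gb_zero hQ n, gb_zero hQ (n+1), gb_self hQ n, gb_self hQ (n+1),
      show 2*n+1-n = n+1 by omega, Finset.prod_range_succ]
    ring

lemma summable_qExp (hq : 1 < q) {x : ℝ} (hx : 0 ≤ x) :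
    Summable (fun n : ℕ => x ^ n / qFact q n) := by
  apply summable_of_ratio_norm_eventually_le (r := 1/2) (by norm_num)
  have htend : Filter.Tendsto (fun n : ℕ => q ^ (n + 1)) Filter.atTop Filter.atTop :=
    (tendsto_pow_atTop_atTop_of_one_lt hq).comp (Filter.tendsto_add_atTop_nat 1)
  filter_upwards [htend.eventually_ge_atTop (2 * x * (q - 1) + 1)] with n hn
  have hF := qFact_pos hq n
  have hFs := qFact_pos hq (n + 1)
  have hd : (0:ℝ) < q ^ (n + 1) - 1 := by
    have : 1 < q ^ (n+1) := one_lt_pow₀ hq (by omega); linarith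
  rw [Real.norm_of_nonneg (div_nonneg (pow_nonneg hx _) hFs.le),
    Real.norm_of_nonneg (div_nonneg (pow_nonneg hx _) hF.le)]
  have heq : x ^ (n + 1) / qFact q (n + 1)
      = (x * (q - 1) / (q ^ (n + 1) - 1)) * (x ^ n / qFact q n) := by
    rw [qFact_succ]
    field_simp
    ring
  rw [heq]
  apply mul_le_mul_of_nonneg_right _ (div_nonneg (pow_nonneg hx _) hF.le)
  rw [div_le_div_iff₀ hd (by norm_num)]
  nlinarith

lemma prod_eq (hq : 1 < q) (n : ℕ) :
    (∏ l ∈ Finset.range n, (q ^ (l + 1) + 1)) * qFact q n = (1 + q) ^ n * qFact (q ^ 2) n := by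
  rw [qFact, qFact, ← Finset.prod_mul_distrib,
    show ((1:ℝ) + q) ^ n = ∏ _l ∈ Finset.range n, (1 + q) by simp,
    ← Finset.prod_mul_distrib]
  apply Finset.prod_congr rfl
  intro l _
  have hq1 : q - 1 ≠ 0 := by linarith
  have hq2 : q ^ 2 - 1 ≠ 0 := by nlinarith
  field_simp
  ring

lemma coeff_le (hq : 1 < q) {x : ℝ} (hx : 0 ≤ x) (n : ℕ) :
    ∑ k ∈ Finset.range (n + 1),
        (x ^ k / qFact (q ^ 2) k) * (x ^ (n - k) / qFact (q ^ 2) (n - k))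
      ≤ ((1 + q) * x) ^ n / qFact q n := by
  have hQ : 1 < q ^ 2 := by nlinarith
  have hFn := qFact_pos hQ n
  have step1 : ∀ k ∈ Finset.range (n + 1),
      (x ^ k / qFact (q ^ 2) k) * (x ^ (n - k) / qFact (q ^ 2) (n - k))
        = x ^ n / qFact (q ^ 2) n * gb (q ^ 2) n k := by
    intro k hk
    rw [Finset.mem_range] at hk
    have hxk : x ^ k * x ^ (n - k) = x ^ n := by
      rw [← pow_add]; congr 1; omega
    rw [gb]
    rw [div_mul_div_comm, hxk, div_mul_div_comm, div_eq_div_iff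
      (mul_pos (qFact_pos hQ k) (qFact_pos hQ (n-k))).ne'
      (mul_pos (qFact_pos hQ n) (mul_pos (qFact_pos hQ k) (qFact_pos hQ (n-k)))).ne']
    ring
  rw [Finset.sum_congr rfl step1, ← Finset.mul_sum]
  have hsum : ∑ k ∈ Finset.range (n + 1), gb (q ^ 2) n k
      ≤ ∑ k ∈ Finset.range (n + 1), q ^ k * gb (q ^ 2) n k := by
    apply Finset.sum_le_sum
    intro k _
    nlinarith [gb_pos hQ n k, one_le_pow₀ hq.le (n := k)]
  have hP := key hq n
  calc x ^ n / qFact (q ^ 2) n * ∑ k ∈ Finset.range (n + 1), gb (q ^ 2) n k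
      ≤ x ^ n / qFact (q ^ 2) n * ∏ l ∈ Finset.range n, (q ^ (l + 1) + 1) := by
        rw [← hP]
        exact mul_le_mul_of_nonneg_left hsum (div_nonneg (pow_nonneg hx _) hFn.le)
    _ = ((1 + q) * x) ^ n / qFact q n := by
        have h := prod_eq hq n
        have hG := qFact_pos hq n
        rw [mul_pow, div_mul_eq_mul_div, div_eq_div_iff hFn.ne' hG.ne']
        linear_combination x ^ n * h

end aux

/-- For all `z ∈ ℂ` and all `q > 1`, `e_{q²}(|z|)² ≤ e_q(|(1+q)z|)`. -/
theorem qExp_sq_le (q : ℝ) (hq : 1 < q) (z : ℂ) :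
    (qExpR (q ^ 2) ‖z‖) ^ 2 ≤ qExpR q ‖((1 + q : ℝ) : ℂ) * z‖ := by
  have hQ : 1 < q ^ 2 := by nlinarith
  set x := ‖z‖ with hxdef
  have hx : 0 ≤ x := norm_nonneg z
  have hnorm : ‖((1 + q : ℝ) : ℂ) * z‖ = (1 + q) * x := by
    rw [norm_mul, Complex.norm_real, Real.norm_of_nonneg (by linarith)]
  rw [hnorm]
  have hf : Summable (fun n : ℕ => x ^ n / qFact (q ^ 2) n) := summable_qExp hQ hx
  have hfn : Summable (fun n : ℕ => ‖x ^ n / qFact (q ^ 2) n‖) :=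
    hf.congr fun n =>
      (Real.norm_of_nonneg (div_nonneg (pow_nonneg hx _) (qFact_pos hQ n).le)).symm
  rw [qExpR, qExpR, sq, tsum_mul_tsum_eq_tsum_sum_range_of_summable_norm hfn hfn]
  exact Summable.tsum_le_tsum (coeff_le hq hx)
    (summable_norm_sum_mul_range_of_summable_norm hfn hfn).of_norm
    (summable_qExp hq (by positivity))
end
end

section
/- The 'discrete' q-Laplace transform commutes with δ_q: L_{q,1}^{[d]}(δ_q g) = δ_q L_{q,1}^{[d]}(g), for g analytic on the q-spiral with suitable growth. -/
open scoped BigOperators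
noncomputable section

/-- The q-exponential `e_q(w) = Σ_{n≥0} w^n/[n]_q!`. -/
def qExp (q : ℝ) (w : ℂ) : ℂ := ∑' n : ℕ, w ^ n / (qFact q n : ℂ)

/-- The "discrete" q-Laplace transform of order 1 in direction `d` (a Jackson-integral sum):
`L_{q,1}^{[d]}(g)(z) = (q−1) e^{id} Σ_{l∈ℤ} q^l g(q^l e^{id}) / (z e_q(q^{l+1} e^{id}/z))`. -/
def qLaplace (q d : ℝ) (g : ℂ → ℂ) (z : ℂ) : ℂ :=
  ((q : ℂ) - 1) * Complex.exp (Complex.I * d) *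
    ∑' l : ℤ, (q : ℂ) ^ l * g ((q : ℂ) ^ l * Complex.exp (Complex.I * d)) /
      (z * qExp q ((q : ℂ) ^ (l + 1) * Complex.exp (Complex.I * d) / z))

set_option maxHeartbeats 1000000 in
/-- The discrete q-Laplace transform commutes with `δ_q`:
`L_{q,1}^{[d]}(δ_q g) = δ_q L_{q,1}^{[d]}(g)`, for `g` analytic on the q-spiral with suitable
growth (formalized by nonvanishing of denominators and absolute summability at `z` and `qz`). -/
theorem qLaplace_comm_deltaQ (q d : ℝ) (hq : 1 < q) (g : ℂ → ℂ) (z : ℂ) (hz : z ≠ 0)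
    (hden : ∀ l : ℤ, qExp q ((q : ℂ) ^ (l + 1) * Complex.exp (Complex.I * d) / z) ≠ 0)
    (hden' : ∀ l : ℤ,
      qExp q ((q : ℂ) ^ (l + 1) * Complex.exp (Complex.I * d) / ((q : ℂ) * z)) ≠ 0)
    (hsum : Summable fun l : ℤ =>
      ‖(q : ℂ) ^ l * g ((q : ℂ) ^ l * Complex.exp (Complex.I * d)) /
        (z * qExp q ((q : ℂ) ^ (l + 1) * Complex.exp (Complex.I * d) / z))‖)
    (hsum' : Summable fun l : ℤ =>
      ‖(q : ℂ) ^ l * g ((q : ℂ) ^ l * Complex.exp (Complex.I * d)) /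
        ((q : ℂ) * z * qExp q ((q : ℂ) ^ (l + 1) * Complex.exp (Complex.I * d) / ((q : ℂ) * z)))‖)
    (hsum'' : Summable fun l : ℤ =>
      ‖(q : ℂ) ^ l * ((g ((q : ℂ) * ((q : ℂ) ^ l * Complex.exp (Complex.I * d))) -
            g ((q : ℂ) ^ l * Complex.exp (Complex.I * d))) / ((q : ℂ) - 1)) /
        (z * qExp q ((q : ℂ) ^ (l + 1) * Complex.exp (Complex.I * d) / z))‖) :
    qLaplace q d (fun ζ => (g ((q : ℂ) * ζ) - g ζ) / ((q : ℂ) - 1)) z =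
      (qLaplace q d g ((q : ℂ) * z) - qLaplace q d g z) / ((q : ℂ) - 1) := by
  have hq0 : (q : ℂ) ≠ 0 := by
    simp only [ne_eq, Complex.ofReal_eq_zero]; nlinarith
  have hq1 : (q : ℂ) - 1 ≠ 0 := by
    intro h
    have h1 : (q : ℂ) = 1 := by linear_combination h
    have : q = 1 := by exact_mod_cast h1
    nlinarith
  set e : ℂ := Complex.exp (Complex.I * d) with he
  set f : ℤ → ℂ := fun l =>
    (q : ℂ) ^ l * g ((q : ℂ) ^ l * e) / (z * qExp q ((q : ℂ) ^ (l + 1) * e / z)) with hf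
  set f' : ℤ → ℂ := fun l =>
    (q : ℂ) ^ l * g ((q : ℂ) ^ l * e) /
      ((q : ℂ) * z * qExp q ((q : ℂ) ^ (l + 1) * e / ((q : ℂ) * z))) with hf'
  have hSf : Summable f := hsum.of_norm
  have hSf' : Summable f' := hsum'.of_norm
  have hSu : Summable (fun l : ℤ => f' (l + 1)) :=
    ((Equiv.addRight (1 : ℤ)).summable_iff).mpr hSf'
  have key : ∀ l : ℤ, f' (l + 1) =
      (q : ℂ) ^ l * g ((q : ℂ) * ((q : ℂ) ^ l * e)) / (z * qExp q ((q : ℂ) ^ (l + 1) * e / z)) := by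
    intro l
    have h2 : (q : ℂ) ^ (l + 1 + 1) * e / ((q : ℂ) * z) = (q : ℂ) ^ (l + 1) * e / z := by
      rw [zpow_add_one₀ hq0 (l + 1)]
      field_simp
    have harg : (q : ℂ) ^ (l + 1) * e = (q : ℂ) * ((q : ℂ) ^ l * e) := by
      rw [zpow_add_one₀ hq0]; ring
    have main : ∀ G E : ℂ, (q : ℂ) ^ (l + 1) * G / ((q : ℂ) * z * E) = (q : ℂ) ^ l * G / (z * E) := by
      intro G E
      rw [zpow_add_one₀ hq0, show (q : ℂ) ^ l * (q : ℂ) * G = (q : ℂ) * ((q : ℂ) ^ l * G) by ring,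
        show (q : ℂ) * z * E = (q : ℂ) * (z * E) by ring, mul_div_mul_left _ _ hq0]
    simp only [hf', h2, harg]
    exact main _ _
  have hterm : ∀ l : ℤ,
      (q : ℂ) ^ l * ((g ((q : ℂ) * ((q : ℂ) ^ l * e)) - g ((q : ℂ) ^ l * e)) / ((q : ℂ) - 1)) /
        (z * qExp q ((q : ℂ) ^ (l + 1) * e / z)) = (f' (l + 1) - f l) / ((q : ℂ) - 1) := by
    intro l
    rw [key l]
    simp only [hf]
    ring
  have hre : ∑' l : ℤ, f' (l + 1) = ∑' l : ℤ, f' l := (Equiv.addRight (1 : ℤ)).tsum_eq f'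
  simp only [qLaplace]
  rw [tsum_congr hterm, tsum_div_const, Summable.tsum_sub hSu hSf, hre]
  ring
end
end
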